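/- (Lemma 7.) Let n ≥ 1, let y_1, ..., y_n ∈ {+1, -1} be fixed labels with n⁺ = #{i : y_i = +1} > n⁻ = n - n⁺, and set ρ = (n⁺ - n⁻)/n. Let η ∈ [0, 1/2), δ ∈ (0,1), and let Z_1, ..., Z_n be independent Bernoulli(η) random variables. Define ñ⁺ = ∑_{i : y_i = +1} (1 - Z_i) + ∑_{i : y_i = -1} Z_i and ñ⁻ = n - ñ⁺. If n ≥ (2/(ρ²(1-2η)²))·ln(1/δ), then Pr[ñ⁺ - ñ⁻ < 0] ≤ δ; that is, majority voting at the leaf succeeds with probability at least 1-δ. -/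

import Mathlib

/-!
Write `ỹᵢ = yᵢ (1 - 2 Zᵢ) ∈ {±1}` for the noisy label, so that `ñ⁺ - ñ⁻ = ∑ ỹᵢ`. The `ỹᵢ` are
independent with `𝔼 ỹᵢ = yᵢ (1 - 2η)`, hence `𝔼 ∑ ỹᵢ = nρ(1 - 2η)`. Majority voting fails only
if `∑ ỹᵢ` falls below its mean by `nρ(1 - 2η)`, which by Hoeffding's inequality for variables
in `[-1, 1]` has probability at most `exp (-nρ²(1 - 2η)² / 2) ≤ δ`.
-/

open MeasureTheory ProbabilityTheory Finset

section Hoeffding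

variable {Ω ι : Type*} [MeasurableSpace Ω] {μ : Measure Ω}

theorem integral_eq_measureReal_of_zero_or_one {Z : Ω → ℝ} (hZ : Measurable Z)
    (h01 : ∀ ω, Z ω = 0 ∨ Z ω = 1) : μ[Z] = μ.real {ω | Z ω = 1} := by
  rw [← integral_indicator_one (s := {ω | Z ω = 1}) (hZ (measurableSet_singleton 1))]
  congr 1
  funext ω
  rcases h01 ω with h | h <;> simp [h]

variable [IsProbabilityMeasure μ]

theorem measureReal_sum_le_sum_integral_sub_le {X : ι → Ω → ℝ} (h_indep : iIndepFun X μ)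
    (h_meas : ∀ i, AEMeasurable (X i) μ) {a b : ℝ} (h_bdd : ∀ i, ∀ᵐ ω ∂μ, X i ω ∈ Set.Icc a b)
    (s : Finset ι) {ε : ℝ} (hε : 0 ≤ ε) :
    μ.real {ω | ∑ i ∈ s, X i ω ≤ ∑ i ∈ s, μ[X i] - ε} ≤
      Real.exp (-2 * ε ^ 2 / (#s * (b - a) ^ 2)) := by
  have h_subG : ∀ i ∈ s, HasSubgaussianMGF (fun ω => μ[X i] - X i ω) ((‖b - a‖₊ / 2) ^ 2) μ :=
    fun i _ => by
      convert (hasSubgaussianMGF_of_mem_Icc (h_meas i) (h_bdd i)).neg using 1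
      ext ω
      simp
  have h_indep' : iIndepFun (fun i ω => μ[X i] - X i ω) μ := by
    exact h_indep.comp (fun i t => μ[X i] - t) fun _ => measurable_const.sub measurable_id
  have h_set : {ω | ∑ i ∈ s, X i ω ≤ ∑ i ∈ s, μ[X i] - ε} =
      {ω | ε ≤ ∑ i ∈ s, (μ[X i] - X i ω)} := by
    ext ω
    simp only [Set.mem_ofPred_eq, sum_sub_distrib]
    constructor <;> intro h <;> linarith
  rw [h_set]
  refine (HasSubgaussianMGF.measure_sum_ge_le_of_iIndepFun h_indep' h_subG hε).trans_eq ?_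
  congr 1
  rw [sum_const, nsmul_eq_mul]
  push_cast
  rw [Real.norm_eq_abs, div_pow, sq_abs,
    show (2 : ℝ) * (#s * ((b - a) ^ 2 / 2 ^ 2)) = #s * (b - a) ^ 2 / 2 by ring, div_div_eq_mul_div]
  ring

end Hoeffding

section LabelNoise

variable {Ω ι : Type*}

def noisyLabel (y : ι → ℝ) (Z : ι → Ω → ℝ) (i : ι) (ω : Ω) : ℝ := y i * (1 - 2 * Z i ω)

variable {y : ι → ℝ} {Z : ι → Ω → ℝ}

theorem two_mul_sum_filter_sub_card (s : Finset ι) (hy : ∀ i, y i = 1 ∨ y i = -1)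
    (z : ι → ℝ) :
    2 * ((∑ i ∈ s with y i = 1, (1 - z i)) + ∑ i ∈ s with y i = -1, z i) - #s =
      ∑ i ∈ s, y i * (1 - 2 * z i) := by
  rw [sum_filter, sum_filter, card_eq_sum_ones, Nat.cast_sum, mul_add, mul_sum, mul_sum,
    ← sum_add_distrib, ← sum_sub_distrib]
  refine sum_congr rfl fun i _ => ?_
  rcases hy i with h | h <;> norm_num [h]
  ring

theorem sum_eq_two_mul_card_filter_sub_card (s : Finset ι) (hy : ∀ i, y i = 1 ∨ y i = -1) :
    ∑ i ∈ s, y i = 2 * #{i ∈ s | y i = 1} - #s := by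
  simpa using (two_mul_sum_filter_sub_card s hy 0).symm

theorem noisyLabel_mem_Icc (hy : ∀ i, y i = 1 ∨ y i = -1) (hZ01 : ∀ i ω, Z i ω = 0 ∨ Z i ω = 1)
    (i : ι) (ω : Ω) : noisyLabel y Z i ω ∈ Set.Icc (-1) 1 := by
  rcases hy i with h | h <;> rcases hZ01 i ω with h' | h' <;> norm_num [noisyLabel, h, h']

variable [MeasurableSpace Ω] {μ : Measure Ω} [IsProbabilityMeasure μ]

theorem integral_noisyLabel (hZ_meas : ∀ i, Measurable (Z i))
    (hZ01 : ∀ i ω, Z i ω = 0 ∨ Z i ω = 1) {η : ℝ} (hη : 0 ≤ η)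
    (hZη : ∀ i, μ {ω | Z i ω = 1} = ENNReal.ofReal η) (i : ι) :
    μ[noisyLabel y Z i] = y i * (1 - 2 * η) := by
  have hZ_int : Integrable (Z i) μ := Integrable.of_mem_Icc 0 1 (hZ_meas i).aemeasurable
    (ae_of_all _ fun ω => by rcases hZ01 i ω with h | h <;> norm_num [h])
  simp only [noisyLabel]
  rw [integral_const_mul, integral_sub (integrable_const 1) (hZ_int.const_mul 2),
    integral_const_mul, integral_eq_measureReal_of_zero_or_one (hZ_meas i) (hZ01 i),
    measureReal_def, hZη i, ENNReal.toReal_ofReal hη]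
  simp

theorem measureReal_sum_noisyLabel_le_le (hy : ∀ i, y i = 1 ∨ y i = -1)
    (hZ_meas : ∀ i, Measurable (Z i)) (hZ01 : ∀ i ω, Z i ω = 0 ∨ Z i ω = 1) {η : ℝ} (hη : 0 ≤ η)
    (hZη : ∀ i, μ {ω | Z i ω = 1} = ENNReal.ofReal η) (h_indep : iIndepFun Z μ)
    (s : Finset ι) {ε : ℝ} (hε : 0 ≤ ε) :
    μ.real {ω | ∑ i ∈ s, noisyLabel y Z i ω ≤ (∑ i ∈ s, y i) * (1 - 2 * η) - ε} ≤
      Real.exp (-ε ^ 2 / (2 * #s)) := by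
  have h_indep' : iIndepFun (noisyLabel y Z) μ := by
    exact h_indep.comp (fun i t => y i * (1 - 2 * t)) fun i => by fun_prop
  have h_meas : ∀ i, AEMeasurable (noisyLabel y Z i) μ := fun i => by
    have := hZ_meas i
    unfold noisyLabel
    fun_prop
  have h := measureReal_sum_le_sum_integral_sub_le h_indep' h_meas
    (fun i => ae_of_all _ (noisyLabel_mem_Icc hy hZ01 i)) s hε
  simp only [integral_noisyLabel hZ_meas hZ01 hη hZη, ← sum_mul] at h
  refine h.trans_eq ?_
  congr 1
  ring

end LabelNoise

theorem exp_neg_le_of_log_one_div_le {δ x : ℝ} (hδ : 0 < δ) (h : Real.log (1 / δ) ≤ x) :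
    Real.exp (-x) ≤ δ :=
  calc Real.exp (-x) ≤ Real.exp (-Real.log (1 / δ)) := by gcongr
    _ = δ := by rw [one_div, Real.log_inv, neg_neg, Real.exp_log hδ]

theorem majority_vote_sample_complexity_general {Ω : Type*} [MeasurableSpace Ω]
    (μ : Measure Ω) [IsProbabilityMeasure μ]
    (n : ℕ) (y : Fin n → ℝ) (hy : ∀ i, y i = 1 ∨ y i = -1)
    (nplus nminus : ℕ)
    (hnp : nplus = (univ.filter fun i => y i = 1).card)
    (hnm : nminus = n - nplus) (hmaj : nminus < nplus)
    (ρ : ℝ) (hρ : ρ = ((nplus : ℝ) - nminus) / n)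
    (η : ℝ) (hη : η ∈ Set.Ico (0:ℝ) (1/2))
    (δ : ℝ) (hδ : δ ∈ Set.Ioo (0:ℝ) 1)
    (Z : Fin n → Ω → ℝ) (hZmeas : ∀ i, Measurable (Z i))
    (hZval : ∀ i ω, Z i ω = 0 ∨ Z i ω = 1)
    (hZη : ∀ i, μ {ω | Z i ω = 1} = ENNReal.ofReal η)
    (hindep : iIndepFun Z μ)
    (nplusTilde : Ω → ℝ)
    (hnt : ∀ ω, nplusTilde ω =
      (∑ i ∈ univ.filter fun i => y i = 1, (1 - Z i ω)) +
      (∑ i ∈ univ.filter fun i => y i = -1, Z i ω))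
    (nminusTilde : Ω → ℝ) (hnmT : ∀ ω, nminusTilde ω = n - nplusTilde ω)
    (hsample : (n : ℝ) ≥ (2 / (ρ^2 * (1 - 2*η)^2)) * Real.log (1/δ)) :
    μ {ω | nplusTilde ω - nminusTilde ω < 0} ≤ ENNReal.ofReal δ := by
  have hβ : 0 < 1 - 2 * η := by linarith [hη.2]
  have hnpn : nplus ≤ n := hnp ▸ (card_filter_le _ _).trans_eq (card_fin n)
  have hn : 0 < n := by omega
  have hρ_pos : 0 < ρ := hρ ▸ div_pos (sub_pos.mpr (mod_cast hmaj)) (by positivity)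
  have hlabels : ∑ i, y i = n * ρ := by
    rw [sum_eq_two_mul_card_filter_sub_card univ hy, ← hnp, hρ, hnm, Nat.cast_sub hnpn,
      card_univ, Fintype.card_fin]
    field_simp
    ring
  have hmargin : ∀ ω, nplusTilde ω - nminusTilde ω = ∑ i, noisyLabel y Z i ω := fun ω => by
    simp only [noisyLabel]
    rw [hnmT, hnt, ← two_mul_sum_filter_sub_card univ hy (Z · ω), card_univ, Fintype.card_fin]
    ring
  have hfail : {ω | nplusTilde ω - nminusTilde ω < 0} ⊆
      {ω | ∑ i, noisyLabel y Z i ω ≤ (∑ i, y i) * (1 - 2 * η) - n * ρ * (1 - 2 * η)} :=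
    fun ω hω => by
      rw [Set.mem_ofPred_eq, hmargin] at hω
      rw [Set.mem_ofPred_eq, hlabels, sub_self]
      exact hω.le
  have hlog : Real.log (1 / δ) ≤ (n * ρ * (1 - 2 * η)) ^ 2 / (2 * #(univ : Finset (Fin n))) := by
    rw [ge_iff_le, div_mul_eq_mul_div, div_le_iff₀ (by positivity)] at hsample
    rw [card_univ, Fintype.card_fin]
    field_simp
    linarith
  rw [ENNReal.le_ofReal_iff_toReal_le (measure_ne_top _ _) hδ.1.le, ← measureReal_def]
  refine (measureReal_mono hfail).trans
    ((measureReal_sum_noisyLabel_le_le hy hZmeas hZval hη.1 hZη hindep univ ?_).trans ?_)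
  · positivity
  · rw [neg_div]
    exact exp_neg_le_of_log_one_div_le hδ.1 hlog

/-- Lemma 7: at a leaf with `n` samples whose noise-free labels have positive majority
margin `ρ = (n⁺ - n⁻)/n`, under symmetric label noise of rate `η < 1/2`, if
`n ≥ (2/(ρ²(1-2η)²))·ln(1/δ)` then majority voting fails with probability at most `δ`,
i.e. it succeeds with probability at least `1-δ`. -/
theorem majority_vote_sample_complexity {Ω : Type*} [MeasurableSpace Ω]
    (μ : Measure Ω) [IsProbabilityMeasure μ]
    (n : ℕ) (hn : 1 ≤ n) (y : Fin n → ℝ) (hy : ∀ i, y i = 1 ∨ y i = -1)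
    (nplus nminus : ℕ)
    (hnp : nplus = (univ.filter fun i => y i = 1).card)
    (hnm : nminus = n - nplus) (hmaj : nminus < nplus)
    (ρ : ℝ) (hρ : ρ = ((nplus : ℝ) - nminus) / n)
    (η : ℝ) (hη : η ∈ Set.Ico (0:ℝ) (1/2))
    (δ : ℝ) (hδ : δ ∈ Set.Ioo (0:ℝ) 1)
    (Z : Fin n → Ω → ℝ) (hZmeas : ∀ i, Measurable (Z i))
    (hZval : ∀ i ω, Z i ω = 0 ∨ Z i ω = 1)
    (hZη : ∀ i, μ {ω | Z i ω = 1} = ENNReal.ofReal η)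
    (hindep : iIndepFun Z μ)
    (nplusTilde : Ω → ℝ)
    (hnt : ∀ ω, nplusTilde ω =
      (∑ i ∈ univ.filter fun i => y i = 1, (1 - Z i ω)) +
      (∑ i ∈ univ.filter fun i => y i = -1, Z i ω))
    (nminusTilde : Ω → ℝ) (hnmT : ∀ ω, nminusTilde ω = n - nplusTilde ω)
    (hsample : (n : ℝ) ≥ (2 / (ρ^2 * (1 - 2*η)^2)) * Real.log (1/δ)) :
    μ {ω | nplusTilde ω - nminusTilde ω < 0} ≤ ENNReal.ofReal δ :=
  majority_vote_sample_complexity_general μ n y hy nplus nminus hnp hnm hmaj ρ hρ η hη δ hδ Z hZmeas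
    hZval hZη hindep nplusTilde hnt nminusTilde hnmT hsample
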